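/- Let R = 𝔽₂[a₁, B₂, e₃, c₄, c₅, …][ρ, x₁, x₂, x₃, w]/(x₃² + x₁²B₂ + x₂²a₁², x₂² + x₁²a₁), and let E = R/(ρx₁²w, x₁³w, (x₁²x₃ + x₂³)w). Then the annihilator of the class of ρ³w in E is exactly the principal ideal generated by (the class of) x₁². -/
import Mathlib


/-!
STATEMENT 14: Let `R = 𝔽₂[a₁, B₂, e₃, c₄, c₅, …][ρ, x₁, x₂, x₃, w]/(x₃² + x₁²B₂ + x₂²a₁²,
x₂² + x₁²a₁)` and `E = R/(ρx₁²w, x₁³w, (x₁²x₃ + x₂³)w)`.  The annihilator of the class of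
`ρ³w` in `E` is exactly the principal ideal generated by (the class of) `x₁²`.

We model the ambient polynomial ring with variable set `ℕ ⊕ Fin 5` (`Sum.inl 0, 1, 2 =
a₁, B₂, e₃`, `Sum.inl (k+3) = c_{k+4}`; `Sum.inr 0,…,4 = ρ, x₁, x₂, x₃, w`).
-/

open MvPolynomial

set_option synthInstance.maxHeartbeats 1000000
set_option maxHeartbeats 1000000

noncomputable section

namespace Stmt14

abbrev P := MvPolynomial (ℕ ⊕ Fin 5) (ZMod 2)

def a₁ : P := X (Sum.inl 0)
def B₂ : P := X (Sum.inl 1)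
def e₃ : P := X (Sum.inl 2)
def c (k : ℕ) : P := X (Sum.inl (k + 3))   -- `c k` is `c_{k+4}`
def ρ : P := X (Sum.inr 0)
def x₁ : P := X (Sum.inr 1)
def x₂ : P := X (Sum.inr 2)
def x₃ : P := X (Sum.inr 3)
def w : P := X (Sum.inr 4)

def J : Ideal P := Ideal.span
  {x₃ ^ 2 + x₁ ^ 2 * B₂ + x₂ ^ 2 * a₁ ^ 2, x₂ ^ 2 + x₁ ^ 2 * a₁}

abbrev R := P ⧸ J

def mk : P →+* R := Ideal.Quotient.mk J

/-- the ideal `(ρx₁²w, x₁³w, (x₁²x₃ + x₂³)w)` of `R`. -/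
def I : Ideal R := Ideal.span
  {mk (ρ * x₁ ^ 2 * w), mk (x₁ ^ 3 * w), mk ((x₁ ^ 2 * x₃ + x₂ ^ 3) * w)}

abbrev E := R ⧸ I

def mkE : R →+* E := Ideal.Quotient.mk I

/-! ### Auxiliary ideals in `P` -/

/-- lift of `I` to `P`. -/
def I₀ : Ideal P := Ideal.span
  {ρ * x₁ ^ 2 * w, x₁ ^ 3 * w, (x₁ ^ 2 * x₃ + x₂ ^ 3) * w}

/-- the monomial ideal `(x₁², x₂², x₃²)`. -/
def K : Ideal P := Ideal.span {x₁ ^ 2, x₂ ^ 2, x₃ ^ 2}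

lemma g₁_mem : x₃ ^ 2 + x₁ ^ 2 * B₂ + x₂ ^ 2 * a₁ ^ 2 ∈ J :=
  Ideal.subset_span (Set.mem_insert _ _)
lemma g₂_mem : x₂ ^ 2 + x₁ ^ 2 * a₁ ∈ J :=
  Ideal.subset_span (Set.mem_insert_of_mem _ rfl)
lemma i₁_mem : ρ * x₁ ^ 2 * w ∈ I₀ := Ideal.subset_span (Set.mem_insert _ _)
lemma k₁_mem : x₁ ^ 2 ∈ K := Ideal.subset_span (Set.mem_insert _ _)
lemma k₂_mem : x₂ ^ 2 ∈ K :=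
  Ideal.subset_span (Set.mem_insert_of_mem _ (Set.mem_insert _ _))
lemma k₃_mem : x₃ ^ 2 ∈ K :=
  Ideal.subset_span (Set.mem_insert_of_mem _ (Set.mem_insert_of_mem _ rfl))

lemma hK : Ideal.span {x₁ ^ 2} ⊔ (I₀ ⊔ J) = K := by
  apply le_antisymm
  · refine sup_le ?_ (sup_le ?_ ?_)
    · rw [Ideal.span_le]
      intro q hq; rw [Set.mem_singleton_iff] at hq; subst hq; exact k₁_mem
    · rw [I₀, Ideal.span_le]
      rintro q (rfl | rfl | rfl)
      · rw [show ρ * x₁ ^ 2 * w = ρ * w * x₁ ^ 2 by ring]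
        exact K.mul_mem_left _ k₁_mem
      · rw [show x₁ ^ 3 * w = x₁ * w * x₁ ^ 2 by ring]
        exact K.mul_mem_left _ k₁_mem
      · rw [show (x₁ ^ 2 * x₃ + x₂ ^ 3) * w = x₃ * w * x₁ ^ 2 + x₂ * w * x₂ ^ 2 by ring]
        exact K.add_mem (K.mul_mem_left _ k₁_mem) (K.mul_mem_left _ k₂_mem)
    · rw [J, Ideal.span_le]
      rintro q (rfl | rfl)
      · exact K.add_mem (K.add_mem k₃_mem (K.mul_mem_right _ k₁_mem))
          (K.mul_mem_right _ k₂_mem)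
      · exact K.add_mem k₂_mem (K.mul_mem_right _ k₁_mem)
  · rw [K, Ideal.span_le]
    have h1 : x₁ ^ 2 ∈ Ideal.span {x₁ ^ 2} ⊔ (I₀ ⊔ J) :=
      Ideal.mem_sup_left (Ideal.subset_span rfl)
    have h2 : x₂ ^ 2 ∈ Ideal.span {x₁ ^ 2} ⊔ (I₀ ⊔ J) := by
      rw [show x₂ ^ 2 = (x₂ ^ 2 + x₁ ^ 2 * a₁) - x₁ ^ 2 * a₁ by ring]
      exact sub_mem (Ideal.mem_sup_right (Ideal.mem_sup_right g₂_mem))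
        (Ideal.mul_mem_right _ _ h1)
    rintro q (rfl | rfl | rfl)
    · exact h1
    · exact h2
    · rw [show x₃ ^ 2 = (x₃ ^ 2 + x₁ ^ 2 * B₂ + x₂ ^ 2 * a₁ ^ 2) - x₁ ^ 2 * B₂
        - x₂ ^ 2 * a₁ ^ 2 by ring]
      exact sub_mem (sub_mem (Ideal.mem_sup_right (Ideal.mem_sup_right g₁_mem))
        (Ideal.mul_mem_right _ _ h1)) (Ideal.mul_mem_right _ _ h2)

lemma hmul (p : P) (hp : p ∈ K) : p * (ρ ^ 3 * w) ∈ I₀ ⊔ J := by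
  have hx1 : x₁ ^ 2 * (ρ ^ 3 * w) ∈ I₀ ⊔ J := by
    rw [show x₁ ^ 2 * (ρ ^ 3 * w) = ρ ^ 2 * (ρ * x₁ ^ 2 * w) by ring]
    exact Ideal.mem_sup_left (Ideal.mul_mem_left _ _ i₁_mem)
  have hx2 : x₂ ^ 2 * (ρ ^ 3 * w) ∈ I₀ ⊔ J := by
    rw [show x₂ ^ 2 * (ρ ^ 3 * w) =
      (ρ ^ 3 * w) * (x₂ ^ 2 + x₁ ^ 2 * a₁) - a₁ * ρ ^ 2 * (ρ * x₁ ^ 2 * w) by ring]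
    exact sub_mem (Ideal.mem_sup_right (Ideal.mul_mem_left _ _ g₂_mem))
      (Ideal.mem_sup_left (Ideal.mul_mem_left _ _ i₁_mem))
  have hx3 : x₃ ^ 2 * (ρ ^ 3 * w) ∈ I₀ ⊔ J := by
    rw [show x₃ ^ 2 * (ρ ^ 3 * w) =
      (ρ ^ 3 * w) * (x₃ ^ 2 + x₁ ^ 2 * B₂ + x₂ ^ 2 * a₁ ^ 2)
        - B₂ * (x₁ ^ 2 * (ρ ^ 3 * w)) - a₁ ^ 2 * (x₂ ^ 2 * (ρ ^ 3 * w)) by ring]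
    exact sub_mem (sub_mem (Ideal.mem_sup_right (Ideal.mul_mem_left _ _ g₁_mem))
      (Ideal.mul_mem_left _ _ hx1)) (Ideal.mul_mem_left _ _ hx2)
  refine Submodule.span_induction ?_ ?_ ?_ ?_ hp
  · rintro q (rfl | rfl | rfl)
    · exact hx1
    · exact hx2
    · exact hx3
  · simp
  · intro x y _ _ hx hy
    rw [add_mul]; exact add_mem hx hy
  · intro a x _ hx
    rw [smul_eq_mul, mul_assoc]
    exact Ideal.mul_mem_left _ _ hx

def S : Set ((ℕ ⊕ Fin 5) →₀ ℕ) :=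
  {Finsupp.single (Sum.inr 1) 2, Finsupp.single (Sum.inr 2) 2, Finsupp.single (Sum.inr 3) 2}

lemma K_eq_monomial : K = Ideal.span ((fun s => monomial s (1 : ZMod 2)) '' S) := by
  unfold K S x₁ x₂ x₃
  rw [Set.image_insert_eq, Set.image_insert_eq, Set.image_singleton]
  simp_rw [X_pow_eq_monomial]

/-- `ρ³w` is a monomial in variables not occurring in `K`, so it does not help membership. -/
lemma key (p : P) (h : p * (ρ ^ 3 * w) ∈ K) : p ∈ K := by
  rw [K_eq_monomial, mem_ideal_span_monomial_image] at h ⊢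
  intro d hd
  have hμ : ρ ^ 3 * w = monomial (Finsupp.single (Sum.inr 0) 3 + Finsupp.single (Sum.inr 4) 1)
      (1 : ZMod 2) := by
    unfold ρ w
    rw [X_pow_eq_monomial, X, monomial_mul, mul_one]
  set μ : (ℕ ⊕ Fin 5) →₀ ℕ :=
    Finsupp.single (Sum.inr 0) 3 + Finsupp.single (Sum.inr 4) 1 with hμdef
  have hcoeff : coeff (d + μ) (p * (ρ ^ 3 * w)) = coeff d p := by
    rw [hμ, coeff_mul_monomial, mul_one]
  have hdm : d + μ ∈ (p * (ρ ^ 3 * w)).support := by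
    rw [mem_support_iff, hcoeff]
    exact mem_support_iff.mp hd
  obtain ⟨s, hs, hle⟩ := h _ hdm
  refine ⟨s, hs, ?_⟩
  rcases hs with hs | hs | hs <;> subst hs <;>
  · rw [Finsupp.single_le_iff] at hle ⊢
    simpa [hμdef, Finsupp.add_apply, Finsupp.single_apply] using hle

lemma I_eq_map : I = Ideal.map mk I₀ := by
  unfold I I₀
  rw [Ideal.map_span, Set.image_insert_eq, Set.image_insert_eq, Set.image_singleton]

lemma mem_I_iff (r : P) : mk r ∈ I ↔ r ∈ I₀ ⊔ J := by
  rw [I_eq_map, ← Ideal.mem_comap,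
    Ideal.comap_map_of_surjective mk Ideal.Quotient.mk_surjective]
  have : Ideal.comap mk ⊥ = J := by
    rw [← RingHom.ker_eq_comap_bot]
    exact Ideal.mk_ker
  rw [this]

lemma mkE_mk_eq_zero_iff (r : P) : mkE (mk r) = 0 ↔ r ∈ I₀ ⊔ J := by
  rw [show mkE (mk r) = 0 ↔ mk r ∈ I from Ideal.Quotient.eq_zero_iff_mem]
  exact mem_I_iff r

theorem stmt_14 :
    ∀ e : E, e * mkE (mk (ρ ^ 3 * w)) = 0 ↔
      e ∈ Ideal.span {mkE (mk (x₁ ^ 2))} := by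
  have hsurj : Function.Surjective (mkE.comp mk) :=
    Ideal.Quotient.mk_surjective.comp Ideal.Quotient.mk_surjective
  intro e
  obtain ⟨p, rfl⟩ := hsurj e
  have hL : (mkE.comp mk) p * mkE (mk (ρ ^ 3 * w)) = 0 ↔ p * (ρ ^ 3 * w) ∈ I₀ ⊔ J := by
    rw [RingHom.comp_apply, ← map_mul, ← map_mul]
    exact mkE_mk_eq_zero_iff _
  have hR : (mkE.comp mk) p ∈ Ideal.span {mkE (mk (x₁ ^ 2))} ↔
      p ∈ Ideal.span {x₁ ^ 2} ⊔ (I₀ ⊔ J) := by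
    have hspan : Ideal.span {mkE (mk (x₁ ^ 2))} =
        Ideal.map (mkE.comp mk) (Ideal.span {x₁ ^ 2}) := by
      rw [Ideal.map_span, Set.image_singleton, RingHom.comp_apply]
    rw [hspan, ← Ideal.mem_comap, Ideal.comap_map_of_surjective _ hsurj]
    have hker : Ideal.comap (mkE.comp mk) ⊥ = I₀ ⊔ J := by
      ext r
      rw [Ideal.mem_comap, Ideal.mem_bot, RingHom.comp_apply]
      exact mkE_mk_eq_zero_iff r
    rw [hker]
  rw [hL, hR]
  constructor
  · intro h
    rw [hK]
    exact key p (by rw [← hK]; exact Ideal.mem_sup_right h)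
  · intro h
    rw [hK] at h
    exact hmul p h

end Stmt14

end
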